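/- arXiv:1805.02196 — 3 statements merged into one kernel-verified Lean document; each statement's English description precedes it below -/
import Mathlib

section
/- Suppose t_i ≤ −2 for all i = 1,…,k−1 and s₁ ≥ 0. With p_j, q_j defined by the recursion p_j = −t_j p_{j−1} − p_{j−2}, q_j = −t_j q_{j−1} − q_{j−2}, p₀ = 1, p_{−1} = 0, q₀ = 0, q_{−1} = −1, the matrix A(−s₁,−t₁,…,−t_{k−1}) = A(−t₁,…,−t_{k−1})·[[−s₁,1],[−1,0]] equals [[−s₁p_{k−1}−q_{k−1}, p_{k−1}],[s₁p_{k−2}+q_{k−2}, −p_{k−2}]], and its trace −s₁p_{k−1} − q_{k−1} − p_{k−2} is strictly negative; in particular it is not equal to 2. -/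
open Matrix

/-- `Amat [u₁, …, u_m]` is the matrix
`A(−u₁,…,−u_m) = [[−u_m,1],[−1,0]] ⋯ [[−u₁,1],[−1,0]]`. -/
def Amat (l : List ℤ) : Matrix (Fin 2) (Fin 2) ℤ :=
  ((l.map fun t => (!![-t, 1; -1, 0] : Matrix (Fin 2) (Fin 2) ℤ)).reverse).prod

lemma Amat_nil : Amat [] = 1 := rfl

lemma Amat_cons (x : ℤ) (l : List ℤ) :
    Amat (x :: l) = Amat l * !![-x, 1; -1, 0] := by
  simp [Amat, List.prod_append]

lemma Amat_concat (x : ℤ) (l : List ℤ) :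
    Amat (l ++ [x]) = !![-x, 1; -1, 0] * Amat l := by
  simp [Amat, List.prod_cons]

/-- If `t_i ≤ −2` for `i = 1,…,k−1` and `s₁ ≥ 0`, then
`A(−s₁,−t₁,…,−t_{k−1}) = [[−s₁p_{k−1}−q_{k−1}, p_{k−1}],[s₁p_{k−2}+q_{k−2}, −p_{k−2}]]`,
and its trace `−s₁p_{k−1} − q_{k−1} − p_{k−2}` is strictly negative;
in particular it is not equal to `2`. -/
theorem stmt3 (k : ℕ) (hk : 2 ≤ k) (s₁ : ℤ) (hs₁ : 0 ≤ s₁) (t p q : ℤ → ℤ)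
    (ht : ∀ j : ℤ, 1 ≤ j → j ≤ (k : ℤ) - 1 → t j ≤ -2)
    (hp0 : p 0 = 1) (hpm : p (-1) = 0) (hq0 : q 0 = 0) (hqm : q (-1) = -1)
    (hprec : ∀ j : ℤ, 1 ≤ j → j ≤ (k : ℤ) - 1 → p j = -(t j) * p (j - 1) - p (j - 2))
    (hqrec : ∀ j : ℤ, 1 ≤ j → j ≤ (k : ℤ) - 1 → q j = -(t j) * q (j - 1) - q (j - 2)) :
    Amat (s₁ :: (List.range (k - 1)).map fun i => t ((i : ℤ) + 1)) =
      !![-s₁ * p ((k : ℤ) - 1) - q ((k : ℤ) - 1), p ((k : ℤ) - 1);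
         s₁ * p ((k : ℤ) - 2) + q ((k : ℤ) - 2), -(p ((k : ℤ) - 2))] ∧
    (Amat (s₁ :: (List.range (k - 1)).map fun i => t ((i : ℤ) + 1))).trace < 0 ∧
    (Amat (s₁ :: (List.range (k - 1)).map fun i => t ((i : ℤ) + 1))).trace ≠ 2 := by
  have hlist : ∀ n : ℕ, ((List.range (n+1)).map fun i => t ((i : ℤ) + 1)) =
      (((List.range n).map fun i => t ((i : ℤ) + 1)) ++ [t ((n : ℤ) + 1)]) := by
    intro n; simp [List.range_succ]
  -- key matrix identity by induction
  have key : ∀ m : ℕ, (m : ℤ) ≤ (k : ℤ) - 1 →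
      Amat ((List.range m).map fun i => t ((i : ℤ) + 1)) =
        !![p (m : ℤ), q (m : ℤ); -p ((m : ℤ) - 1), -q ((m : ℤ) - 1)] := by
    intro m
    induction m with
    | zero =>
      intro _
      have h0 : ((0 : ℕ) : ℤ) = 0 := rfl
      rw [show ((List.range 0).map fun i => t ((i : ℤ) + 1)) = [] by simp, Amat_nil, h0]
      norm_num [hp0, hpm, hq0, hqm]
      exact Matrix.one_fin_two
    | succ n ih =>
      intro hle
      have hle' : (n : ℤ) ≤ (k : ℤ) - 1 := by push_cast at hle ⊢; omega
      have h1 : (1 : ℤ) ≤ (n : ℤ) + 1 := by omega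
      have h2 : ((n : ℤ) + 1) ≤ (k : ℤ) - 1 := by push_cast at hle; omega
      rw [hlist n, Amat_concat, ih hle']
      have hp := hprec ((n : ℤ) + 1) h1 h2
      have hq := hqrec ((n : ℤ) + 1) h1 h2
      have e1 : (n : ℤ) + 1 - 1 = (n : ℤ) := by ring
      have e2 : (n : ℤ) + 1 - 2 = (n : ℤ) - 1 := by ring
      rw [e1, e2] at hp hq
      push_cast
      rw [e1, Matrix.mul_fin_two, hp, hq]
      ring_nf
  -- inequalities by induction
  have ineq : ∀ m : ℕ, (m : ℤ) ≤ (k : ℤ) - 1 →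
      p ((m : ℤ) - 1) + 1 ≤ p (m : ℤ) ∧ 0 ≤ p (m : ℤ) ∧
      q ((m : ℤ) - 1) + 1 ≤ q (m : ℤ) ∧ 0 ≤ q (m : ℤ) := by
    intro m
    induction m with
    | zero =>
      intro _
      norm_num [hp0, hpm, hq0, hqm]
    | succ n ih =>
      intro hle
      have hle' : (n : ℤ) ≤ (k : ℤ) - 1 := by push_cast at hle ⊢; omega
      obtain ⟨ih1, ih2, ih3, ih4⟩ := ih hle'
      have h1 : (1 : ℤ) ≤ (n : ℤ) + 1 := by omega
      have h2 : ((n : ℤ) + 1) ≤ (k : ℤ) - 1 := by push_cast at hle; omega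
      have hp := hprec ((n : ℤ) + 1) h1 h2
      have hq := hqrec ((n : ℤ) + 1) h1 h2
      have htt := ht ((n : ℤ) + 1) h1 h2
      have e1 : (n : ℤ) + 1 - 1 = (n : ℤ) := by ring
      have e2 : (n : ℤ) + 1 - 2 = (n : ℤ) - 1 := by ring
      rw [e1, e2] at hp hq
      push_cast
      rw [e1, hp, hq]
      refine ⟨by nlinarith, by nlinarith, by nlinarith, by nlinarith⟩
  have hk1 : ((k - 1 : ℕ) : ℤ) = (k : ℤ) - 1 := by
    have : 1 ≤ k := by omega
    push_cast [this]; ring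
  have e3 : (k : ℤ) - 1 - 1 = (k : ℤ) - 2 := by ring
  have hkey := key (k - 1) (by rw [hk1])
  rw [hk1, e3] at hkey
  have hmain : Amat (s₁ :: (List.range (k - 1)).map fun i => t ((i : ℤ) + 1)) =
      !![-s₁ * p ((k : ℤ) - 1) - q ((k : ℤ) - 1), p ((k : ℤ) - 1);
         s₁ * p ((k : ℤ) - 2) + q ((k : ℤ) - 2), -(p ((k : ℤ) - 2))] := by
    rw [Amat_cons, hkey, Matrix.mul_fin_two]
    ring_nf
  -- inequalities at k-1 and k-2
  obtain ⟨i1, i2, i3, i4⟩ := ineq (k - 1) (by rw [hk1])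
  rw [hk1] at i1 i2 i3 i4
  rw [e3] at i1
  rw [e3] at i3
  have hk2 : ((k - 2 : ℕ) : ℤ) = (k : ℤ) - 2 := by push_cast [hk]; ring
  obtain ⟨j1, j2, j3, j4⟩ := ineq (k - 2) (by rw [hk2]; omega)
  rw [hk2] at j1 j2 j3 j4
  have htr : (Amat (s₁ :: (List.range (k - 1)).map fun i => t ((i : ℤ) + 1))).trace =
      -s₁ * p ((k : ℤ) - 1) - q ((k : ℤ) - 1) - p ((k : ℤ) - 2) := by
    rw [hmain, Matrix.trace_fin_two]
    simp
    ring
  have hneg : (Amat (s₁ :: (List.range (k - 1)).map fun i => t ((i : ℤ) + 1))).trace < 0 := by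
    rw [htr]
    nlinarith
  exact ⟨hmain, hneg, fun h => by rw [h] at hneg; norm_num at hneg⟩
end

section
/- Let Q be a k×k symmetric matrix over ℝ (k ≥ 2) whose diagonal entries are s_i with s_i ≤ −2 for all i and s_j < −2 for some j, whose entries Q_{i,i+1} = Q_{i+1,i} = 1 for all i (cyclically, including Q_{1,k} = Q_{k,1} = 1 when k ≥ 3, or Q_{1,2} = 2 when k = 2), and all other entries 0. Then Q is negative definite. -/
open Matrix

/-- The cyclic intersection matrix of a cycle of `k` spheres with
self-intersection sequence `s`: diagonal entries `s i`, cyclically adjacent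
off-diagonal entries `1` (equal to `2` when `k = 2`, since then `i+1 = i-1`),
other entries `0`. -/
def cycMat (k : ℕ) (s : ZMod k → ℝ) : Matrix (ZMod k) (ZMod k) ℝ :=
  Matrix.of fun i j =>
    if i = j then s i
    else (if j = i + 1 then (1 : ℝ) else 0) + (if j = i - 1 then (1 : ℝ) else 0)

/-- If `D` is a toric minimal cycle of `k ≥ 2` spheres with `s_i ≤ −2` for all
`i` and `s_j < −2` for some `j`, then its intersection matrix is negative
definite. -/
theorem stmt6 (k : ℕ) [NeZero k] (hk : 2 ≤ k) (s : ZMod k → ℝ)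
    (hs : ∀ i, s i ≤ -2) (hj : ∃ j, s j < -2) :
    ∀ x : ZMod k → ℝ, x ≠ 0 → x ⬝ᵥ (cycMat k s).mulVec x < 0 := by
  haveI : Fact (1 < k) := ⟨hk⟩
  have h10 : (1 : ZMod k) ≠ 0 := one_ne_zero
  intro x hx
  -- Step 1: compute mulVec
  have hmv : ∀ i : ZMod k, (cycMat k s).mulVec x i = s i * x i + x (i + 1) + x (i - 1) := by
    intro i
    have hstep : ∀ j : ZMod k,
        (cycMat k s) i j * x j =
          (if j = i then s i * x i else 0) + ((if j = i + 1 then x (i + 1) else 0)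
            + (if j = i - 1 then x (i - 1) else 0)) := by
      intro j
      simp only [cycMat, of_apply]
      by_cases h1 : i = j
      · subst h1
        have h2 : ¬ (i = i + 1) := by simp [h10.symm]
        have h3 : ¬ (i = i - 1) := by
          rw [eq_sub_iff_add_eq]
          simp [h10]
        simp [h2, h3]
      · simp only [h1, if_false, Ne.symm h1, add_mul, ite_mul, one_mul, zero_mul, zero_add]
        by_cases h2 : j = i + 1 <;> by_cases h3 : j = i - 1 <;> simp [h2, h3] <;>
          (split_ifs with h <;> simp [h])
    calc (cycMat k s).mulVec x i = ∑ j : ZMod k, (cycMat k s) i j * x j := rfl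
      _ = ∑ j : ZMod k, ((if j = i then s i * x i else 0) + ((if j = i + 1 then x (i + 1) else 0)
            + (if j = i - 1 then x (i - 1) else 0))) := Finset.sum_congr rfl fun j _ => hstep j
      _ = s i * x i + (x (i + 1) + x (i - 1)) := by
          rw [Finset.sum_add_distrib, Finset.sum_add_distrib]
          simp [Finset.sum_ite_eq']
      _ = s i * x i + x (i + 1) + x (i - 1) := by ring
  -- reindexing identities
  have e1 : ∑ i : ZMod k, x i * x (i - 1) = ∑ i : ZMod k, x i * x (i + 1) := by
    refine Fintype.sum_equiv (Equiv.subRight (1 : ZMod k)) _ _ fun i => ?_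
    simp [Equiv.subRight, mul_comm]
  have e2 : ∑ i : ZMod k, x (i + 1) ^ 2 = ∑ i : ZMod k, x i ^ 2 := by
    refine Fintype.sum_equiv (Equiv.addRight (1 : ZMod k)) _ _ fun i => ?_
    simp [Equiv.addRight]
  -- key identity
  have key : x ⬝ᵥ (cycMat k s).mulVec x
      = (∑ i : ZMod k, (s i + 2) * x i ^ 2) - ∑ i : ZMod k, (x i - x (i + 1)) ^ 2 := by
    have lhs : x ⬝ᵥ (cycMat k s).mulVec x
        = (∑ i : ZMod k, s i * x i ^ 2) + ((∑ i : ZMod k, x i * x (i + 1))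
          + ∑ i : ZMod k, x i * x (i - 1)) := by
      calc x ⬝ᵥ (cycMat k s).mulVec x
          = ∑ i : ZMod k, x i * (s i * x i + x (i + 1) + x (i - 1)) := by
            simp only [dotProduct, hmv]
        _ = ∑ i : ZMod k, (s i * x i ^ 2 + (x i * x (i + 1) + x i * x (i - 1))) :=
            Finset.sum_congr rfl fun i _ => by ring
        _ = _ := by rw [Finset.sum_add_distrib, Finset.sum_add_distrib]
    have hA : ∑ i : ZMod k, (s i + 2) * x i ^ 2
        = (∑ i : ZMod k, s i * x i ^ 2) + ((∑ i : ZMod k, x i ^ 2) + ∑ i : ZMod k, x i ^ 2) := by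
      rw [← Finset.sum_add_distrib, ← Finset.sum_add_distrib]
      exact Finset.sum_congr rfl fun i _ => by ring
    have hB : ∑ i : ZMod k, (x i - x (i + 1)) ^ 2
        = ((∑ i : ZMod k, x i ^ 2) + ∑ i : ZMod k, x i ^ 2)
          - ((∑ i : ZMod k, x i * x (i + 1)) + ∑ i : ZMod k, x i * x (i + 1)) := by
      have : ∑ i : ZMod k, (x i - x (i + 1)) ^ 2
          = ∑ i : ZMod k, ((x i ^ 2 + x (i + 1) ^ 2) - (x i * x (i + 1) + x i * x (i + 1))) :=
        Finset.sum_congr rfl fun i _ => by ring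
      rw [this, Finset.sum_sub_distrib, Finset.sum_add_distrib, Finset.sum_add_distrib, e2]
    rw [lhs, hA, hB, e1]
    ring
  -- inequalities
  have hA0 : ∑ i : ZMod k, (s i + 2) * x i ^ 2 ≤ 0 := by
    apply Finset.sum_nonpos
    intro i _
    exact mul_nonpos_of_nonpos_of_nonneg (by linarith [hs i]) (sq_nonneg _)
  have hB0 : (0 : ℝ) ≤ ∑ i : ZMod k, (x i - x (i + 1)) ^ 2 :=
    Finset.sum_nonneg fun i _ => sq_nonneg _
  rw [key]
  by_contra hcon
  push_neg at hcon
  have hAeq : ∑ i : ZMod k, (s i + 2) * x i ^ 2 = 0 := le_antisymm hA0 (by linarith)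
  have hBeq : ∑ i : ZMod k, (x i - x (i + 1)) ^ 2 = 0 := le_antisymm (by linarith) hB0
  -- B = 0 forces x constant along the cycle
  have hBterm : ∀ i : ZMod k, x i = x (i + 1) := by
    intro i
    have := (Finset.sum_eq_zero_iff_of_nonneg (fun i _ => sq_nonneg (x i - x (i + 1)))).mp hBeq
      i (Finset.mem_univ i)
    have := sq_eq_zero_iff.mp this
    linarith
  have hconst : ∀ (i : ZMod k) (n : ℕ), x (i + n) = x i := by
    intro i n
    induction n with
    | zero => simp
    | succ n ih =>
      have : ((n + 1 : ℕ) : ZMod k) = (n : ZMod k) + 1 := by push_cast; ring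
      rw [this, ← add_assoc, ← hBterm (i + n), ih]
  -- A = 0 with s j + 2 < 0 forces x j = 0
  obtain ⟨j, hjlt⟩ := hj
  have hAterm : (s j + 2) * x j ^ 2 = 0 :=
    (Finset.sum_eq_zero_iff_of_nonpos (fun i _ =>
      mul_nonpos_of_nonpos_of_nonneg (by linarith [hs i]) (sq_nonneg _))).mp hAeq
      j (Finset.mem_univ j)
  have hxj : x j = 0 := by
    rcases mul_eq_zero.mp hAterm with h | h
    · linarith
    · exact pow_eq_zero_iff (by norm_num) |>.mp h
  apply hx
  funext m
  have hm : j + ((m - j).val : ℕ) = m := by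
    rw [ZMod.natCast_val, ZMod.cast_id]
    ring
  have := hconst j (m - j).val
  rw [hm] at this
  simp [this, hxj]
end

section
/- Solvability of Qz = a is preserved under toric blow-up: let Q be the cyclic intersection matrix of the sequence (s₁,…,s_k) with area vector a = (a₁,…,a_k), all a_i > 0, and suppose Qz = a is solvable. Let Q' be the intersection matrix of the blown-up sequence (s₁−1, −1, s₂−1, s₃, …, s_k) (inserting a −1-sphere between positions 1 and 2), with area vector a' = (a₁−e, e, a₂−e, a₃, …, a_k) for the blow-up of size e with 0 < e < min(a₁,a₂). Then Q'z' = a' is solvable. -/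
open Matrix

/-- The self-intersection sequence after a toric blow-up of size `e` between
components `0` and `1`: the sequence `(s₀ − 1, −1, s₁ − 1, s₂, …, s_{k-1})`. -/
def blowUpSeq (k : ℕ) (s : ZMod k → ℝ) : ZMod (k + 1) → ℝ :=
  fun i =>
    if i.val = 0 then s 0 - 1
    else if i.val = 1 then -1
    else if i.val = 2 then s 1 - 1
    else s ((i.val - 1 : ℕ) : ZMod k)

/-- The area vector after a toric blow-up of size `e` between components `0`
and `1`: `(a₀ − e, e, a₁ − e, a₂, …, a_{k-1})`. -/
def blowUpArea (k : ℕ) (a : ZMod k → ℝ) (e : ℝ) : ZMod (k + 1) → ℝ :=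
  fun i =>
    if i.val = 0 then a 0 - e
    else if i.val = 1 then e
    else if i.val = 2 then a 1 - e
    else a ((i.val - 1 : ℕ) : ZMod k)

lemma cyc_row (k : ℕ) [NeZero k] (hk : 2 ≤ k) (s z : ZMod k → ℝ) (i : ZMod k) :
    (cycMat k s).mulVec z i = s i * z i + z (i + 1) + z (i - 1) := by
  haveI : Fact (1 < k) := ⟨hk⟩
  have h1 : i ≠ i + 1 := by
    intro h
    have : (1 : ZMod k) = 0 := by linear_combination -h
    exact one_ne_zero this
  have h2 : i ≠ i - 1 := by
    intro h
    have : (1 : ZMod k) = 0 := by linear_combination h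
    exact one_ne_zero this
  have key : ∀ j, cycMat k s i j * z j
      = (if j = i then s i * z i else 0) + (if j = i + 1 then z j else 0)
        + (if j = i - 1 then z j else 0) := by
    intro j
    unfold cycMat
    by_cases hij : i = j
    · subst hij
      simp only [Matrix.of_apply, if_pos rfl, if_neg h1, if_neg h2, add_zero, if_true]
    · simp [hij, Ne.symm hij, add_mul, ite_mul]
  have : (cycMat k s).mulVec z i = ∑ j, ((if j = i then s i * z i else 0)
      + (if j = i + 1 then z j else 0) + (if j = i - 1 then z j else 0)) := by
    unfold Matrix.mulVec dotProduct
    exact Finset.sum_congr rfl (fun j _ => key j)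
  rw [this]
  simp [Finset.sum_add_distrib, Finset.sum_ite_eq']

/-- Solvability of `Qz = a` is preserved under toric blow-up: if the cyclic
intersection matrix `Q` of `(s₀, …, s_{k-1})` with positive area vector `a`
satisfies `Qz = a` for some `z`, and `0 < e < min(a₀, a₁)`, then the blown-up
intersection matrix `Q'` and area vector `a'` also satisfy `Q'z' = a'` for
some `z'`. -/
theorem stmt10 (k : ℕ) [NeZero k] (hk : 2 ≤ k) (s a : ZMod k → ℝ)
    (ha : ∀ i, 0 < a i) (z : ZMod k → ℝ) (hz : (cycMat k s).mulVec z = a)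
    (e : ℝ) (he : 0 < e) (he' : e < min (a 0) (a 1)) :
    ∃ z' : ZMod (k + 1) → ℝ,
      (cycMat (k + 1) (blowUpSeq k s)).mulVec z' = blowUpArea k a e := by
  classical
  have hk1 : 2 ≤ k + 1 := by omega
  have hz' : ∀ j : ZMod k, s j * z j + z (j + 1) + z (j - 1) = a j := by
    intro j; rw [← cyc_row k hk s z j, hz]
  refine ⟨fun i => if i.val = 0 then z 0 else if i.val = 1 then z 0 + z 1 - e
      else z ((i.val - 1 : ℕ) : ZMod k), ?_⟩
  funext i
  rw [cyc_row (k+1) hk1]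

  have hv : ∀ t : ℕ, t < k + 1 → ((t : ZMod (k+1))).val = t :=
    fun t ht => ZMod.val_cast_of_lt ht
  have hm : i.val < k + 1 := ZMod.val_lt i
  have him : ((i.val : ℕ) : ZMod (k+1)) = i := ZMod.natCast_rightInverse i
  set m := i.val with hmdef
  unfold blowUpSeq blowUpArea
  rcases Nat.lt_or_ge m 3 with h3 | h3
  · interval_cases m
    · -- m = 0 : i = 0
      have hi : i = 0 := by rw [← him]; norm_num
      subst hi
      have hvp : ((0:ZMod (k+1)) + 1).val = 1 := by
        rw [zero_add]; simpa using hv 1 (by omega)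
      have hvm : ((0:ZMod (k+1)) - 1).val = k := by
        rw [zero_sub]; exact ZMod.val_neg_one k
      rw [hvp, hvm]
      have hnk : ((k - 1 : ℕ) : ZMod k) = 0 - 1 := by
        have : ((k - 1 : ℕ) : ZMod k) + 1 = 0 := by
          have : ((k - 1 : ℕ) : ZMod k) + ((1:ℕ) : ZMod k) = ((k : ℕ) : ZMod k) := by
            rw [← Nat.cast_add]; congr 1; omega
          simpa using this
        linear_combination this
      have h0 := hz' 0
      rw [zero_add, ← hnk] at h0
      have hk0 : ¬ (k = 0) := by omega
      have hk1' : ¬ (k = 1) := by omega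
      simp only [ZMod.val_zero, if_pos rfl, if_neg hk0, if_neg hk1']
      norm_num
      linear_combination h0
    · -- m = 1
      have hvp : (i + 1).val = 2 := by
        have e1 : i + 1 = ((2:ℕ) : ZMod (k+1)) := by rw [← him]; push_cast; ring
        rw [e1]; exact hv 2 (by omega)
      have hvm : (i - 1).val = 0 := by
        have e1 : i - 1 = ((0:ℕ) : ZMod (k+1)) := by rw [← him]; push_cast; ring
        rw [e1]; exact hv 0 (by omega)
      simp only [← hmdef, hvp, hvm]
      norm_num
      ring
    · -- m = 2
      have hvm : (i - 1).val = 1 := by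
        have e1 : i - 1 = ((1:ℕ) : ZMod (k+1)) := by rw [← him]; push_cast; ring
        rw [e1]; exact hv 1 (by omega)
      have h1 := hz' 1
      have e2 : (1:ZMod k) + 1 = ((2:ℕ) : ZMod k) := by push_cast; ring
      rw [e2, sub_self] at h1
      rcases eq_or_lt_of_le hk with hk2 | hk3
      · -- k = 2
        have hk2' : k = 2 := hk2.symm
        subst hk2'
        have hvp : (i + 1).val = 0 := by
          have e1 : i + 1 = ((3:ℕ) : ZMod 3) := by rw [← him]; push_cast; ring
          rw [e1]; decide
        simp only [← hmdef, hvp, hvm]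
        have h20 : ((2:ℕ) : ZMod 2) = 0 := by decide
        rw [h20] at h1
        norm_num
        linear_combination h1
      · -- k ≥ 3
        have hvp : (i + 1).val = 3 := by
          have e1 : i + 1 = ((3:ℕ) : ZMod (k+1)) := by rw [← him]; push_cast; ring
          rw [e1]; exact hv 3 (by omega)
        simp only [← hmdef, hvp, hvm]
        norm_num
        push_cast at h1 ⊢
        linear_combination h1
  · -- 3 ≤ m
    have hm0 : ¬ (m = 0) := by omega
    have hm1' : ¬ (m = 1) := by omega
    have hm2 : ¬ (m = 2) := by omega
    have keym : ((m - 1 : ℕ) : ZMod (k+1)) + 1 = i := by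
      have h : ((m - 1) + 1 : ℕ) = m := by omega
      rw [← him, ← h]; push_cast; ring
    have hvml : i - 1 = ((m - 1 : ℕ) : ZMod (k+1)) := (eq_sub_of_add_eq keym).symm
    have hvm : (i - 1).val = m - 1 := by rw [hvml]; exact hv _ (by omega)
    have hj := hz' ((m - 1 : ℕ) : ZMod k)
    have ej1 : ((m - 1 : ℕ) : ZMod k) + 1 = ((m : ℕ) : ZMod k) := by
      have h : ((m - 1) + 1 : ℕ) = m := by omega
      rw [← h]; push_cast; ring
    have ej2 : ((m - 1 : ℕ) : ZMod k) - 1 = ((m - 2 : ℕ) : ZMod k) := by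
      have : ((m - 2 : ℕ) : ZMod k) + 1 = ((m - 1 : ℕ) : ZMod k) := by
        have h : ((m - 2) + 1 : ℕ) = m - 1 := by omega
        rw [← h]; push_cast; ring
      linear_combination -this
    rw [ej1, ej2] at hj
    have hsub : (m : ℕ) - 1 - 1 = m - 2 := by omega
    rcases eq_or_lt_of_le (show m + 1 ≤ k + 1 by omega) with hmk | hmk
    · -- m = k : i + 1 = 0
      have hmk' : m = k := by omega
      have hvp : (i + 1).val = 0 := by
        have e1 : i + 1 = ((0:ℕ) : ZMod (k+1)) := by
          rw [← him, hmk']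
          have : ((k : ℕ) : ZMod (k+1)) + 1 = ((k + 1 : ℕ) : ZMod (k+1)) := by push_cast; ring
          rw [this, ZMod.natCast_self, Nat.cast_zero]
        rw [e1]; exact hv 0 (by omega)
      simp only [← hmdef, hvp, hvm]
      simp only [if_neg hm0, if_neg hm1', if_neg hm2, if_pos rfl, eq_self_iff_true, if_true,
        if_neg (show ¬ (m - 1 = 0) by omega), if_neg (show ¬ (m - 1 = 1) by omega), hsub]
      have hz0 : ((m : ℕ) : ZMod k) = 0 := by rw [hmk']; exact ZMod.natCast_self k
      rw [hz0] at hj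
      linear_combination hj
    · -- m < k
      have hvp : (i + 1).val = m + 1 := by
        have e1 : i + 1 = ((m + 1 : ℕ) : ZMod (k+1)) := by rw [← him]; push_cast; ring
        rw [e1]; exact hv _ (by omega)
      simp only [← hmdef, hvp, hvm]
      simp only [if_neg hm0, if_neg hm1', if_neg hm2, if_pos rfl, eq_self_iff_true, if_true,
        if_neg (show ¬ (m - 1 = 0) by omega), if_neg (show ¬ (m - 1 = 1) by omega),
        if_neg (show ¬ (m + 1 = 0) by omega), if_neg (show ¬ (m + 1 = 1) by omega),
        hsub, Nat.add_sub_cancel]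
      linear_combination hj
end
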